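/- Let B be a unital ℂ-algebra and φ : B → ℂ a unital linear functional. Then for every t ≥ 0, every n ≥ 1, and all f₁,…,fₙ ∈ B°, the free cumulants with respect to Ψ_t on the tensor algebra T(B°) satisfy R^{Ψ_t}_n(X(f₁),…,X(fₙ)) = t·B^φ_n(f₁,…,fₙ). -/

import Mathlib

open scoped Classical

noncomputable section

variable {B : Type*} [Ring B] [Algebra ℂ B]

/-- The iterated map `Λ(g₁, Λ(g₂, …))`, where `Λ(f,g) = fg - φ(fg)·1`. -/
def LamChain (φ : B →ₗ[ℂ] ℂ) : List B → B
  | [] => 1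
  | [g] => g
  | g :: h :: rest =>
      g * LamChain φ (h :: rest) - φ (g * LamChain φ (h :: rest)) • (1 : B)

/-- `W(g₁,…,g_k) = g₁·Λ(g₂, Λ(g₃, …, Λ(g_{k-1}, g_k)…))`. -/
def Wof (φ : B →ₗ[ℂ] ℂ) : List B → B
  | [] => 1
  | g :: rest => g * LamChain φ rest

/-- `i` and `j` lie in a common block of `P`. -/
def sameBlock {n : ℕ} (P : Finset (Finset (Fin n))) (i j : Fin n) : Prop :=
  ∃ V ∈ P, i ∈ V ∧ j ∈ V

/-- `P` is a set partition of `{0,…,n-1}`. -/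
def IsPartition {n : ℕ} (P : Finset (Finset (Fin n))) : Prop :=
  (∀ V ∈ P, V.Nonempty) ∧ ∀ i : Fin n, ∃! V, V ∈ P ∧ i ∈ V

/-- `P` is a noncrossing partition. -/
def IsNC {n : ℕ} (P : Finset (Finset (Fin n))) : Prop :=
  IsPartition P ∧ ∀ i j k l : Fin n, i < j → j < k → k < l →
    sameBlock P i k → sameBlock P j l → sameBlock P i j

/-- `P` is an interval partition: blocks are sets of consecutive integers. -/
def IsIntervalPartition {n : ℕ} (P : Finset (Finset (Fin n))) : Prop :=
  IsPartition P ∧ ∀ i j k : Fin n, i < j → j < k → sameBlock P i k → sameBlock P i j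

/-- `V` is an inner block of `P`. -/
def IsInnerBlock {n : ℕ} (P : Finset (Finset (Fin n))) (V : Finset (Fin n)) : Prop :=
  ∃ W ∈ P, W ≠ V ∧ ∃ j ∈ V, ∃ i ∈ W, ∃ k ∈ W, i < j ∧ j < k

/-- Noncrossing partitions of `{0,…,n-1}`. -/
def NCSet (n : ℕ) : Finset (Finset (Finset (Fin n))) :=
  Finset.univ.filter fun P => IsNC P

/-- Noncrossing partitions with no singleton blocks. -/
def NCnsSet (n : ℕ) : Finset (Finset (Finset (Fin n))) :=
  Finset.univ.filter fun P => IsNC P ∧ ∀ V ∈ P, 2 ≤ V.card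

/-- Interval partitions of `{0,…,n-1}`. -/
def IntervalSet (n : ℕ) : Finset (Finset (Finset (Fin n))) :=
  Finset.univ.filter fun P => IsIntervalPartition P

/-- Irreducible noncrossing partitions: exactly one outer block. -/
def NCirrSet (n : ℕ) : Finset (Finset (Finset (Fin n))) :=
  Finset.univ.filter fun P => IsNC P ∧ (P.filter fun V => ¬ IsInnerBlock P V).card = 1

/-- The tuple of entries of `a` indexed by `V`, in increasing order of index. -/
def blockList {n : ℕ} {A : Type*} (a : Fin n → A) (V : Finset (Fin n)) : List A :=
  (V.sort (· ≤ ·)).map a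

/-- `W(V)` from the paper. -/
def Wblock {n : ℕ} (φ : B →ₗ[ℂ] ℂ) (f : Fin n → B) (V : Finset (Fin n)) : B :=
  Wof φ (blockList f V)

/-- Number of outer blocks. -/
def outerCount {n : ℕ} (P : Finset (Finset (Fin n))) : ℕ :=
  (P.filter fun V => ¬ IsInnerBlock P V).card

/-- Number of inner blocks. -/
def innerCount {n : ℕ} (P : Finset (Finset (Fin n))) : ℕ :=
  (P.filter fun V => IsInnerBlock P V).card

/-- `R` is the family of free cumulant functionals of `ω` (written on lists):
the moment–cumulant recursion over noncrossing partitions. -/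
def IsFreeCumulant {A : Type*} [Ring A] [Algebra ℂ A] (ω : A →ₗ[ℂ] ℂ)
    (R : List A → ℂ) : Prop :=
  ∀ (n : ℕ), 1 ≤ n → ∀ a : Fin n → A,
    ω (List.ofFn a).prod = ∑ P ∈ NCSet n, ∏ V ∈ P, R (blockList a V)

/-- `Bc` is the family of Boolean cumulant functionals of `ω` (written on lists). -/
def IsBooleanCumulant {A : Type*} [Ring A] [Algebra ℂ A] (ω : A →ₗ[ℂ] ℂ)
    (Bc : List A → ℂ) : Prop :=
  ∀ (n : ℕ), 1 ≤ n → ∀ a : Fin n → A,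
    ω (List.ofFn a).prod = ∑ P ∈ IntervalSet n, ∏ V ∈ P, Bc (blockList a V)

/-- `Rc` is the family of conditionally free cumulant functionals of the pair `(ω, ω')`,
where `Rψ` is the family of free cumulants of `ω'`. -/
def IsCFreeCumulant {A : Type*} [Ring A] [Algebra ℂ A] (ω : A →ₗ[ℂ] ℂ)
    (Rψ Rc : List A → ℂ) : Prop :=
  ∀ (n : ℕ), 1 ≤ n → ∀ a : Fin n → A,
    ω (List.ofFn a).prod = ∑ P ∈ NCSet n,
      (∏ V ∈ P.filter (fun V => IsInnerBlock P V), Rψ (blockList a V)) *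
      (∏ V ∈ P.filter (fun V => ¬ IsInnerBlock P V), Rc (blockList a V))

/-- `Φ` is the state `Φ_t` on the tensor algebra `T(B°)`. -/
def IsPhiT (φ : B →ₗ[ℂ] ℂ) (t : ℝ)
    (Φ : TensorAlgebra ℂ (LinearMap.ker φ) →ₗ[ℂ] ℂ) : Prop :=
  Φ 1 = 1 ∧ ∀ (n : ℕ), 1 ≤ n → ∀ f : Fin n → LinearMap.ker φ,
    Φ (List.ofFn fun i => TensorAlgebra.ι ℂ (f i)).prod
      = ∑ P ∈ NCnsSet n, (1 + (t : ℂ)) ^ outerCount P * (t : ℂ) ^ innerCount P *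
          ∏ V ∈ P, φ (Wblock φ (fun i => (f i : B)) V)

/-- `Ψ` is the state `Ψ_t` on the tensor algebra `T(B°)`. -/
def IsPsiT (φ : B →ₗ[ℂ] ℂ) (t : ℝ)
    (Ψ : TensorAlgebra ℂ (LinearMap.ker φ) →ₗ[ℂ] ℂ) : Prop :=
  Ψ 1 = 1 ∧ ∀ (n : ℕ), 1 ≤ n → ∀ f : Fin n → LinearMap.ker φ,
    Ψ (List.ofFn fun i => TensorAlgebra.ι ℂ (f i)).prod
      = ∑ P ∈ NCnsSet n, (t : ℂ) ^ P.card *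
          ∏ V ∈ P, φ (Wblock φ (fun i => (f i : B)) V)

/-- Free independence of a family of unital subalgebras with respect to `ω`. -/
def FreeIndep {A : Type*} [Ring A] [Algebra ℂ A] (ω : A →ₗ[ℂ] ℂ)
    {k : ℕ} (T : Fin k → Subalgebra ℂ A) : Prop :=
  ∀ (n : ℕ), 1 ≤ n → ∀ u : ℕ → Fin k, (∀ j, j + 1 < n → u j ≠ u (j + 1)) →
    ∀ a : ℕ → A, (∀ j < n, a j ∈ T (u j)) → (∀ j < n, ω (a j) = 0) →
      ω (((List.range n).map a).prod) = 0

end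

-- ===================== auxiliary development =====================

noncomputable section Aux

variable {B : Type*} [Ring B] [Algebra ℂ B]

-- basic
lemma Wof_cons (φ : B →ₗ[ℂ] ℂ) (g : B) (rest : List B) :
    Wof φ (g :: rest) = g * LamChain φ rest := rfl

lemma Wof_single (φ : B →ₗ[ℂ] ℂ) (g : B) : Wof φ [g] = g := by
  simp [Wof, LamChain]

lemma mul_Wof (φ : B →ₗ[ℂ] ℂ) (g : B) (l : List B) (hl : l ≠ [])
    (h0 : ∀ x ∈ l, φ x = 0) :
    g * Wof φ l = Wof φ (g :: l) + φ (Wof φ l) • g := by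
  match l with
  | [h] =>
      have : φ (Wof φ [h]) = 0 := by rw [Wof_single]; exact h0 h (by simp)
      rw [this, Wof_single, zero_smul, add_zero]
      rfl
  | h :: r :: rs =>
      have hL : LamChain φ (h :: r :: rs)
          = h * LamChain φ (r :: rs) - φ (h * LamChain φ (r :: rs)) • (1:B) := rfl
      have hW : Wof φ (h :: r :: rs) = h * LamChain φ (r :: rs) := rfl
      rw [Wof_cons, Wof_cons, hL]
      rw [mul_sub, mul_smul_comm, mul_one]
      abel

lemma prod_eq_W (φ : B →ₗ[ℂ] ℂ) :
    ∀ l : List B, l ≠ [] → (∀ x ∈ l, φ x = 0) →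
    l.prod = Wof φ l + ∑ j ∈ Finset.Ico 1 l.length,
      φ (Wof φ (l.drop j)) • (l.take j).prod := by
  intro l
  induction l with
  | nil => intro h; exact absurd rfl h
  | cons g l ih =>
      intro _ h0
      rcases eq_or_ne l [] with rfl | hl
      · simp [Wof_single]
      · have h0' : ∀ x ∈ l, φ x = 0 := fun x hx => h0 x (List.mem_cons_of_mem _ hx)
        have hlen : 1 ≤ l.length := List.length_pos_iff.mpr hl
        have : (g :: l).prod = g * l.prod := List.prod_cons
        rw [this, ih hl h0', mul_add, Finset.mul_sum, mul_Wof φ g l hl h0']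
        simp only [mul_smul_comm]
        have hre : ∀ j ∈ Finset.Ico 1 l.length,
            φ (Wof φ (l.drop j)) • (g * (l.take j).prod)
            = φ (Wof φ ((g::l).drop (j+1))) • ((g::l).take (j+1)).prod := by
          intro j hj
          simp [List.take_cons, List.prod_cons, mul_smul_comm]
        rw [Finset.sum_congr rfl hre]
        have hmap : ∑ j ∈ Finset.Ico 1 l.length,
              φ (Wof φ ((g::l).drop (j+1))) • ((g::l).take (j+1)).prod
            = ∑ j ∈ Finset.Ico 2 (l.length + 1),
              φ (Wof φ ((g::l).drop j)) • ((g::l).take j).prod := by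
          rw [Finset.sum_Ico_eq_sum_range, Finset.sum_Ico_eq_sum_range]
          apply Finset.sum_congr rfl
          intro x _
          have h2 : 1 + x + 1 = 2 + x := by omega
          rw [h2]
        rw [hmap]
        have hlast : ∑ j ∈ Finset.Ico 1 (g::l).length,
            φ (Wof φ ((g::l).drop j)) • ((g::l).take j).prod
            = φ (Wof φ ((g::l).drop 1)) • ((g::l).take 1).prod
              + ∑ j ∈ Finset.Ico 2 (l.length + 1),
                φ (Wof φ ((g::l).drop j)) • ((g::l).take j).prod := by
          rw [Finset.sum_eq_sum_Ico_succ_bot (by simp [Nat.lt_add_of_pos_left]; omega : 1 < (g::l).length)]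
          simp
        rw [hlast]
        simp only [List.drop_succ_cons, List.drop_zero, List.take_succ_cons,
          List.take_zero, List.prod_cons, List.prod_nil, mul_one]
        abel

-- ### basics

lemma mem_IntervalSet {n : ℕ} {P : Finset (Finset (Fin n))} :
    P ∈ IntervalSet n ↔ IsIntervalPartition P := by
  simp [IntervalSet]

lemma block_eq {n : ℕ} {P : Finset (Finset (Fin n))} (hP : IsPartition P)
    {V W : Finset (Fin n)} {x : Fin n} (hV : V ∈ P) (hW : W ∈ P)
    (hxV : x ∈ V) (hxW : x ∈ W) : V = W := by
  obtain ⟨U, _, hUu⟩ := hP.2 x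
  rw [hUu V ⟨hV, hxV⟩, hUu W ⟨hW, hxW⟩]

lemma IntervalSet_zero : IntervalSet 0 = {∅} := by
  ext P
  simp only [mem_IntervalSet, Finset.mem_singleton]
  constructor
  · intro hP
    by_contra hne
    obtain ⟨V, hV⟩ := Finset.nonempty_iff_ne_empty.mpr hne
    obtain ⟨x, _⟩ := hP.1.1 V hV
    exact x.elim0
  · rintro rfl
    refine ⟨⟨fun V hV => absurd hV (by simp), fun i => i.elim0⟩, fun i => i.elim0⟩

def tailB (n m : ℕ) : Finset (Fin n) := Finset.univ.filter (fun x => m ≤ x.val)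

lemma mem_tailB {n m : ℕ} {x : Fin n} : x ∈ tailB n m ↔ m ≤ x.val := by
  simp [tailB]

-- ### existence and uniqueness of the tail block

lemma tail_exists_unique {n : ℕ} (hn : 1 ≤ n) {P : Finset (Finset (Fin n))}
    (hP : IsIntervalPartition P) : ∃! m : Fin n, tailB n m.val ∈ P := by
  have hlastlt : n - 1 < n := by omega
  set last : Fin n := ⟨n - 1, hlastlt⟩ with hlast
  obtain ⟨V₀, ⟨hV₀, hlastV₀⟩, hV₀u⟩ := hP.1.2 last
  have hV₀ne : V₀.Nonempty := ⟨last, hlastV₀⟩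
  set μ : Fin n := V₀.min' hV₀ne with hμ
  have hμV₀ : μ ∈ V₀ := V₀.min'_mem hV₀ne
  have hV₀eq : V₀ = tailB n μ.val := by
    apply Finset.ext
    intro x
    rw [mem_tailB]
    constructor
    · intro hx
      exact V₀.min'_le x hx
    · intro hx
      have hμx : μ ≤ x := hx
      rcases eq_or_lt_of_le hμx with heq | hlt
      · rwa [← heq]
      rcases eq_or_ne x last with rfl | hxl
      · exact hlastV₀
      have hxlast : x < last := by
        have : x.val ≤ n - 1 := by omega
        have : x.val < n - 1 := lt_of_le_of_ne this (fun h => hxl (Fin.ext h))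
        exact this
      have hsb : sameBlock P μ x := hP.2 μ x last hlt hxlast ⟨V₀, hV₀, hμV₀, hlastV₀⟩
      obtain ⟨W, hW, hμW, hxW⟩ := hsb
      rw [block_eq hP.1 hV₀ hW hμV₀ hμW]
      exact hxW
  refine ⟨μ, ?_, ?_⟩
  · show tailB n μ.val ∈ P
    rw [← hV₀eq]; exact hV₀
  intro m hm
  have hlastm : last ∈ tailB n m.val := by
    rw [mem_tailB]; show m.val ≤ (⟨n-1, hlastlt⟩ : Fin n).val
    simp only []
    have := m.isLt; omega
  have hlastμ : last ∈ tailB n μ.val := by rw [← hV₀eq]; exact hlastV₀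
  have heq : tailB n m.val = tailB n μ.val := by
    apply block_eq hP.1 hm (by rw [← hV₀eq]; exact hV₀) hlastm hlastμ
  have h1 : μ.val ≤ m.val := by
    have : m ∈ tailB n m.val := by rw [mem_tailB]
    rw [heq, mem_tailB] at this; exact this
  have h2 : m.val ≤ μ.val := by
    have : μ ∈ tailB n μ.val := by rw [mem_tailB]
    rw [← heq, mem_tailB] at this; exact this
  exact Fin.ext (le_antisymm h2 h1)

lemma sum_fiber {n : ℕ} (hn : 1 ≤ n) (F : Finset (Finset (Fin n)) → ℂ) :
    ∑ P ∈ IntervalSet n, F P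
      = ∑ m : Fin n, ∑ P ∈ (IntervalSet n).filter (fun P => tailB n m.val ∈ P), F P := by
  simp only [Finset.sum_filter]
  rw [Finset.sum_comm]
  apply Finset.sum_congr rfl
  intro P hP
  obtain ⟨m₀, hm₀, hu⟩ := tail_exists_unique hn (mem_IntervalSet.mp hP)
  rw [Finset.sum_eq_single_of_mem m₀ (Finset.mem_univ _)]
  · rw [if_pos hm₀]
  · intro m _ hne
    rw [if_neg (fun h => hne (hu m h))]

-- ### the bijection for a fixed tail block

section Bij

variable {n m : ℕ} (hm : m < n)

def lowE (hm : m < n) : Fin m ↪ Fin n := Fin.castLEEmb hm.le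

lemma lowE_val (y : Fin m) : ((lowE hm) y).val = y.val := by
  simp [lowE]

lemma lowE_lt (y : Fin m) : ((lowE hm) y).val < m := by
  rw [lowE_val]; exact y.isLt

lemma eq_lowE {x : Fin n} (hx : x.val < m) : x = lowE hm ⟨x.val, hx⟩ := by
  apply Fin.ext; rw [lowE_val]

def fwdP (hm : m < n) (Q : Finset (Finset (Fin m))) : Finset (Finset (Fin n)) :=
  insert (tailB n m) (Q.image (fun V => V.map (lowE hm)))

def resB (hm : m < n) (V : Finset (Fin n)) : Finset (Fin m) :=
  Finset.univ.filter (fun y => (lowE hm) y ∈ V)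

lemma mem_resB {V : Finset (Fin n)} {y : Fin m} : y ∈ resB hm V ↔ (lowE hm) y ∈ V := by
  simp [resB]

lemma mem_resB' {V : Finset (Fin n)} {y : Fin m} : y ∈ resB hm V ↔ (lowE hm) y ∈ V :=
  mem_resB hm

def bwdP (hm : m < n) (P : Finset (Finset (Fin n))) : Finset (Finset (Fin m)) :=
  (P.erase (tailB n m)).image (resB hm)

lemma mself_tailB : (⟨m, hm⟩ : Fin n) ∈ tailB n m := by
  rw [mem_tailB]

lemma tailB_not_map {V : Finset (Fin m)} : tailB n m ≠ V.map (lowE hm) := by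
  intro h
  have := mself_tailB hm
  rw [h, Finset.mem_map] at this
  obtain ⟨y, _, hy⟩ := this
  have hv := congrArg Fin.val hy
  rw [lowE_val] at hv
  simp only [] at hv
  have := y.isLt
  omega

lemma tailB_notin_image {Q : Finset (Finset (Fin m))} :
    tailB n m ∉ Q.image (fun V => V.map (lowE hm)) := by
  rw [Finset.mem_image]
  rintro ⟨V, _, hV⟩
  exact tailB_not_map hm hV.symm

lemma low_of_ne_tail {P : Finset (Finset (Fin n))} (hP : IsPartition P)
    (htail : tailB n m ∈ P) {V : Finset (Fin n)} (hV : V ∈ P) (hne : V ≠ tailB n m)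
    {x : Fin n} (hx : x ∈ V) : x.val < m := by
  by_contra h
  push_neg at h
  have hxt : x ∈ tailB n m := mem_tailB.mpr h
  exact hne (block_eq hP hV htail hx hxt)

lemma fwdP_mem {Q : Finset (Finset (Fin m))} (hQ : IsIntervalPartition Q) :
    IsIntervalPartition (fwdP hm Q) := by
  constructor
  constructor
  · -- nonempty blocks
    intro V hV
    rw [fwdP, Finset.mem_insert] at hV
    rcases hV with rfl | hV
    · exact ⟨_, mself_tailB hm⟩
    · rw [Finset.mem_image] at hV
      obtain ⟨V', hV', rfl⟩ := hV
      obtain ⟨y, hy⟩ := hQ.1.1 V' hV'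
      exact ⟨_, Finset.mem_map_of_mem _ hy⟩
  · -- unique cover
    intro i
    rcases lt_or_ge i.val m with hi | hi
    · obtain ⟨V, ⟨hVQ, hiV⟩, hVu⟩ := hQ.1.2 ⟨i.val, hi⟩
      refine ⟨V.map (lowE hm), ⟨?_, ?_⟩, ?_⟩
      · exact Finset.mem_insert_of_mem (Finset.mem_image_of_mem _ hVQ)
      · rw [eq_lowE hm hi]; exact Finset.mem_map_of_mem _ hiV
      · rintro W ⟨hW, hiW⟩
        rw [fwdP, Finset.mem_insert] at hW
        rcases hW with rfl | hW
        · rw [mem_tailB] at hiW; omega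
        · rw [Finset.mem_image] at hW
          obtain ⟨V₂, hV₂, rfl⟩ := hW
          rw [Finset.mem_map] at hiW
          obtain ⟨y, hyV₂, hyi⟩ := hiW
          have hyy : y = ⟨i.val, hi⟩ := by
            apply Fin.ext
            have := congrArg Fin.val hyi
            rw [lowE_val] at this
            exact this
          rw [hVu V₂ ⟨hV₂, by rw [← hyy]; exact hyV₂⟩]
    · refine ⟨tailB n m, ⟨Finset.mem_insert_self _ _, mem_tailB.mpr hi⟩, ?_⟩
      rintro W ⟨hW, hiW⟩
      rw [fwdP, Finset.mem_insert] at hW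
      rcases hW with rfl | hW
      · rfl
      · rw [Finset.mem_image] at hW
        obtain ⟨V₂, _, rfl⟩ := hW
        rw [Finset.mem_map] at hiW
        obtain ⟨y, _, hyi⟩ := hiW
        have := congrArg Fin.val hyi
        rw [lowE_val] at this
        have h2 := y.isLt
        omega
  · -- interval property
    intro i j k hij hjk hsb
    obtain ⟨W, hW, hiW, hkW⟩ := hsb
    rw [fwdP, Finset.mem_insert] at hW
    rcases hW with rfl | hW
    · rw [mem_tailB] at hiW
      have hj : j ∈ tailB n m := by
        rw [mem_tailB]
        have := hij.le
        omega
      exact ⟨tailB n m, Finset.mem_insert_self _ _, mem_tailB.mpr hiW, hj⟩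
    · rw [Finset.mem_image] at hW
      obtain ⟨V, hVQ, rfl⟩ := hW
      rw [Finset.mem_map] at hiW hkW
      obtain ⟨yi, hyiV, hyi⟩ := hiW
      obtain ⟨yk, hykV, hyk⟩ := hkW
      have hkv := congrArg Fin.val hyk
      rw [lowE_val] at hkv
      have hiv := congrArg Fin.val hyi
      rw [lowE_val] at hiv
      have hkm : k.val < m := by rw [← hkv]; exact yk.isLt
      have hjm : j.val < m := by omega
      set yj : Fin m := ⟨j.val, hjm⟩
      have h1 : yi < yj := by
        rw [Fin.lt_def]
        show yi.val < j.val
        omega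
      have h2 : yj < yk := by
        rw [Fin.lt_def]
        show j.val < yk.val
        omega
      have hsb2 : sameBlock Q yi yk := ⟨V, hVQ, hyiV, hykV⟩
      obtain ⟨U, hU, hyiU, hyjU⟩ := hQ.2 yi yj yk h1 h2 hsb2
      refine ⟨U.map (lowE hm), Finset.mem_insert_of_mem (Finset.mem_image_of_mem _ hU),
        ?_, ?_⟩
      · rw [← hyi]; exact Finset.mem_map_of_mem _ hyiU
      · have : j = (lowE hm) yj := by apply Fin.ext; rw [lowE_val]
        rw [this]; exact Finset.mem_map_of_mem _ hyjU

lemma tailB_mem_fwdP {Q : Finset (Finset (Fin m))} : tailB n m ∈ fwdP hm Q :=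
  Finset.mem_insert_self _ _

lemma bwdP_mem {P : Finset (Finset (Fin n))} (hP : IsIntervalPartition P)
    (htail : tailB n m ∈ P) : IsIntervalPartition (bwdP hm P) := by
  constructor
  constructor
  · intro W hW
    rw [bwdP, Finset.mem_image] at hW
    obtain ⟨V, hV, rfl⟩ := hW
    rw [Finset.mem_erase] at hV
    obtain ⟨x, hx⟩ := hP.1.1 V hV.2
    have hxm : x.val < m := low_of_ne_tail hP.1 htail hV.2 hV.1 hx
    refine ⟨⟨x.val, hxm⟩, ?_⟩
    rw [mem_resB hm, ← eq_lowE hm hxm]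
    exact hx
  · intro i
    obtain ⟨V, ⟨hV, hiV⟩, hVu⟩ := hP.1.2 ((lowE hm) i)
    have hVne : V ≠ tailB n m := by
      intro h
      rw [h, mem_tailB] at hiV
      have := lowE_lt hm i
      omega
    refine ⟨resB hm V, ⟨?_, (mem_resB hm).mpr hiV⟩, ?_⟩
    · exact Finset.mem_image_of_mem _ (Finset.mem_erase.mpr ⟨hVne, hV⟩)
    · rintro W ⟨hW, hiW⟩
      rw [bwdP, Finset.mem_image] at hW
      obtain ⟨V₂, hV₂, rfl⟩ := hW
      rw [Finset.mem_erase] at hV₂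
      rw [mem_resB hm] at hiW
      rw [hVu V₂ ⟨hV₂.2, hiW⟩]
  · intro i j k hij hjk hsb
    obtain ⟨W, hW, hiW, hkW⟩ := hsb
    rw [bwdP, Finset.mem_image] at hW
    obtain ⟨V, hV, rfl⟩ := hW
    rw [Finset.mem_erase] at hV
    rw [mem_resB hm] at hiW hkW
    have h1 : (lowE hm) i < (lowE hm) j := by
      rw [Fin.lt_def, lowE_val, lowE_val]; exact hij
    have h2 : (lowE hm) j < (lowE hm) k := by
      rw [Fin.lt_def, lowE_val, lowE_val]; exact hjk
    obtain ⟨U, hU, hiU, hjU⟩ := hP.2 _ _ _ h1 h2 ⟨V, hV.2, hiW, hkW⟩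
    have hUne : U ≠ tailB n m := by
      intro h
      rw [h, mem_tailB] at hiU
      have := lowE_lt hm i
      omega
    refine ⟨resB hm U, Finset.mem_image_of_mem _ (Finset.mem_erase.mpr ⟨hUne, hU⟩),
      (mem_resB hm).mpr hiU, (mem_resB hm).mpr hjU⟩

lemma resB_map {V : Finset (Fin m)} : resB hm (V.map (lowE hm)) = V := by
  ext y
  rw [mem_resB hm, Finset.mem_map]
  constructor
  · rintro ⟨z, hz, hzy⟩
    rwa [(lowE hm).injective hzy] at hz
  · intro hy
    exact ⟨y, hy, rfl⟩

lemma map_resB {P : Finset (Finset (Fin n))} (hP : IsPartition P)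
    (htail : tailB n m ∈ P) {V : Finset (Fin n)} (hV : V ∈ P) (hne : V ≠ tailB n m) :
    (resB hm V).map (lowE hm) = V := by
  ext x
  rw [Finset.mem_map]
  constructor
  · rintro ⟨y, hy, rfl⟩
    exact (mem_resB hm).mp hy
  · intro hx
    have hxm : x.val < m := low_of_ne_tail hP htail hV hne hx
    refine ⟨⟨x.val, hxm⟩, ?_, (eq_lowE hm hxm).symm⟩
    rw [mem_resB, ← eq_lowE hm hxm]
    exact hx

lemma bwd_fwd {Q : Finset (Finset (Fin m))} : bwdP hm (fwdP hm Q) = Q := by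
  rw [bwdP, fwdP, Finset.erase_insert (tailB_notin_image hm), Finset.image_image]
  have : ∀ V ∈ Q, (resB hm ∘ fun V => V.map (lowE hm)) V = id V := by
    intro V _
    exact resB_map hm
  rw [Finset.image_congr (fun V hV => this V hV), Finset.image_id]

lemma fwd_bwd {P : Finset (Finset (Fin n))} (hP : IsPartition P)
    (htail : tailB n m ∈ P) : fwdP hm (bwdP hm P) = P := by
  rw [fwdP, bwdP, Finset.image_image]
  have : ∀ V ∈ P.erase (tailB n m),
      ((fun V => Finset.map (lowE hm) V) ∘ resB hm) V = id V := by
    intro V hV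
    rw [Finset.mem_erase] at hV
    exact map_resB hm hP htail hV.2 hV.1
  rw [Finset.image_congr (fun V hV => this V hV), Finset.image_id,
    Finset.insert_erase htail]

lemma fwdP_prod (G : Finset (Fin n) → ℂ) {Q : Finset (Finset (Fin m))} :
    ∏ V ∈ fwdP hm Q, G V = (∏ V ∈ Q, G (V.map (lowE hm))) * G (tailB n m) := by
  rw [fwdP, Finset.prod_insert (tailB_notin_image hm), mul_comm]
  congr 1
  rw [Finset.prod_image]
  intro x _ y _ hxy
  exact Finset.map_injective (lowE hm) hxy

lemma fiber_sum (G : Finset (Fin n) → ℂ) :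
    ∑ P ∈ (IntervalSet n).filter (fun P => tailB n m ∈ P), ∏ V ∈ P, G V
      = (∑ Q ∈ IntervalSet m, ∏ V ∈ Q, G (V.map (lowE hm))) * G (tailB n m) := by
  rw [Finset.sum_mul]
  symm
  apply Finset.sum_nbij' (i := fwdP hm) (j := bwdP hm)
  · intro Q hQ
    rw [Finset.mem_filter]
    exact ⟨mem_IntervalSet.mpr (fwdP_mem hm (mem_IntervalSet.mp hQ)), tailB_mem_fwdP hm⟩
  · intro P hP
    rw [Finset.mem_filter] at hP
    exact mem_IntervalSet.mpr (bwdP_mem hm (mem_IntervalSet.mp hP.1) hP.2)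
  · intro Q _
    exact bwd_fwd hm
  · intro P hP
    rw [Finset.mem_filter] at hP
    exact fwd_bwd hm (mem_IntervalSet.mp hP.1).1 hP.2
  · intro Q _
    exact (fwdP_prod hm G).symm

end Bij

lemma ISrec {n : ℕ} (hn : 1 ≤ n) (G : Finset (Fin n) → ℂ) :
    ∑ P ∈ IntervalSet n, ∏ V ∈ P, G V
      = ∑ m : Fin n, (∑ Q ∈ IntervalSet m.val,
          ∏ V ∈ Q, G (V.map (lowE m.isLt))) * G (tailB n m.val) := by
  rw [sum_fiber hn]
  apply Finset.sum_congr rfl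
  intro m _
  exact fiber_sum m.isLt G


-- ### sort lemmas

lemma sort_eq_of_sorted {α : Type*} [LinearOrder α] (V : Finset α) (w : List α)
    (hw : List.Pairwise (· < ·) w) (hmem : ∀ x, x ∈ w ↔ x ∈ V) :
    V.sort (· ≤ ·) = w := by
  have hnd : w.Nodup := hw.nodup
  have h2 : w.toFinset = V := by
    ext x
    rw [List.mem_toFinset, hmem]
  have h3 : V.val = (w : Multiset α) := by
    rw [← h2]
    show ((w : Multiset α)).dedup = (w : Multiset α)
    exact Multiset.dedup_eq_self.mpr (by exact hnd)
  apply List.Perm.eq_of_pairwise' (Finset.pairwise_sort _ _) (hw.imp le_of_lt) ?_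
  apply Multiset.coe_eq_coe.mp
  rw [Finset.sort_eq, h3]

lemma mem_drop_finRange {n m : ℕ} {x : Fin n} :
    x ∈ (List.finRange n).drop m ↔ m ≤ x.val := by
  rw [List.mem_drop_iff_getElem]
  constructor
  · rintro ⟨i, hm, rfl⟩
    simp
  · intro h
    have hx := x.isLt
    refine ⟨x.val - m, by simp; omega, ?_⟩
    apply Fin.ext
    simp
    omega

lemma sort_tailB {n m : ℕ} : (tailB n m).sort (· ≤ ·) = (List.finRange n).drop m := by
  apply sort_eq_of_sorted
  · exact List.Pairwise.sublist (List.drop_sublist m _) (List.pairwise_lt_finRange n)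
  · intro x
    rw [mem_drop_finRange, mem_tailB]

lemma sort_map' {m n : ℕ} (hm : m < n) (V : Finset (Fin m)) :
    (V.map (lowE hm)).sort (· ≤ ·) = (V.sort (· ≤ ·)).map (lowE hm) := by
  have hs : List.Pairwise (· ≤ ·) ((V.sort (· ≤ ·)).map (lowE hm)) := by
    exact List.Pairwise.map (lowE hm)
      (fun a b hab => by rw [Fin.le_def, lowE_val, lowE_val]; exact hab)
      (Finset.pairwise_sort _ _)
  apply List.Perm.eq_of_pairwise' (Finset.pairwise_sort _ _) hs ?_
  apply Multiset.coe_eq_coe.mp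
  have h1 : ((V.map (lowE hm)).sort (· ≤ ·) : Multiset (Fin n)) = (V.map (lowE hm)).val :=
    Finset.sort_eq _ _
  have h2 : (V.sort (· ≤ ·) : Multiset (Fin m)) = V.val := Finset.sort_eq _ _
  rw [h1, Finset.map_val, ← h2]
  rfl

-- ### blockList lemmas

lemma blockList_tailB {n m : ℕ} {A : Type*} (a : Fin n → A) :
    blockList a (tailB n m) = (List.ofFn a).drop m := by
  rw [blockList, sort_tailB, List.ofFn_eq_map, List.map_drop]

lemma blockList_univ {n : ℕ} {A : Type*} (a : Fin n → A) :
    blockList a Finset.univ = List.ofFn a := by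
  rw [blockList, Fin.sort_univ, List.ofFn_eq_map]

lemma blockList_map {m n : ℕ} (hm : m < n) {A : Type*} (a : Fin n → A)
    (V : Finset (Fin m)) :
    blockList a (V.map (lowE hm)) = blockList (fun y => a ((lowE hm) y)) V := by
  rw [blockList, sort_map' hm, List.map_map, blockList]
  rfl

lemma blockList_singleton {n : ℕ} {A : Type*} (a : Fin n → A) (x : Fin n) :
    blockList a {x} = [a x] := by
  rw [blockList, Finset.sort_singleton]
  rfl

lemma blockList_eq_ofFn {n : ℕ} {A : Type*} (a : Fin n → A) (V : Finset (Fin n)) :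
    blockList a V = List.ofFn (fun i => a ((V.sort (· ≤ ·)).get i)) := by
  rw [blockList]
  conv_lhs => rw [← List.ofFn_get (V.sort (· ≤ ·))]
  rw [List.map_ofFn]
  rfl

lemma ofFn_get_take {A : Type*} (l : List A) (m : ℕ) (hm : m ≤ l.length) :
    List.ofFn (fun y : Fin m => l.get ⟨y.val, lt_of_lt_of_le y.isLt hm⟩) = l.take m := by
  apply List.ext_getElem
  · simp [hm]
  · intro i h1 h2
    simp [List.getElem_take]

-- ### moment recursion for Boolean cumulants

lemma takeMoment (φ : B →ₗ[ℂ] ℂ) (hφ : φ 1 = 1) (Bφ : List B → ℂ)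
    (hBφ : IsBooleanCumulant φ Bφ) (l : List B) (m : ℕ) (hm : m ≤ l.length) :
    ∑ Q ∈ IntervalSet m, ∏ V ∈ Q,
        Bφ (blockList (fun y : Fin m => l.get ⟨y.val, lt_of_lt_of_le y.isLt hm⟩) V)
      = φ ((l.take m).prod) := by
  obtain rfl | h1 := Nat.eq_zero_or_pos m
  · rw [IntervalSet_zero]
    simp [hφ]
  · have := hBφ m h1 (fun y : Fin m => l.get ⟨y.val, lt_of_lt_of_le y.isLt hm⟩)
    rw [ofFn_get_take l m hm] at this
    exact this.symm

lemma momentRec (φ : B →ₗ[ℂ] ℂ) (hφ : φ 1 = 1) (Bφ : List B → ℂ)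
    (hBφ : IsBooleanCumulant φ Bφ) (l : List B) (hl : l ≠ []) :
    φ l.prod = Bφ l + ∑ j ∈ Finset.Ico 1 l.length,
      φ ((l.take j).prod) * Bφ (l.drop j) := by
  have hn : 1 ≤ l.length := List.length_pos_iff.mpr hl
  have h0 := hBφ l.length hn l.get
  rw [List.ofFn_get] at h0
  rw [h0, ISrec hn]
  have hterm : ∀ m : Fin l.length,
      (∑ Q ∈ IntervalSet m.val, ∏ V ∈ Q, Bφ (blockList l.get (V.map (lowE m.isLt))))
        * Bφ (blockList l.get (tailB l.length m.val))
      = φ ((l.take m.val).prod) * Bφ (l.drop m.val) := by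
    intro m
    have hdrop : blockList l.get (tailB l.length m.val) = l.drop m.val := by
      rw [blockList_tailB, List.ofFn_get]
    rw [hdrop]
    congr 1
    rw [← takeMoment φ hφ Bφ hBφ l m.val m.isLt.le]
    apply Finset.sum_congr rfl
    intro Q _
    apply Finset.prod_congr rfl
    intro V _
    rw [blockList_map m.isLt]
    have hfun : (fun y : Fin m.val => l.get ((lowE m.isLt) y))
        = (fun y : Fin m.val => l.get ⟨y.val, lt_of_lt_of_le y.isLt m.isLt.le⟩) := by
      funext y
      have hy : (lowE m.isLt) y = ⟨y.val, lt_of_lt_of_le y.isLt m.isLt.le⟩ :=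
        Fin.ext (lowE_val m.isLt y)
      rw [hy]
    rw [hfun]
  rw [Finset.sum_congr rfl (fun m _ => hterm m)]
  rw [Fin.sum_univ_eq_sum_range (fun j => φ ((l.take j).prod) * Bφ (l.drop j)) l.length]
  rw [Finset.range_eq_Ico, Finset.sum_eq_sum_Ico_succ_bot hn]
  simp [hφ]

-- ### key lemma : Boolean cumulants are given by W

lemma key_lemma (φ : B →ₗ[ℂ] ℂ) (hφ : φ 1 = 1) (Bφ : List B → ℂ)
    (hBφ : IsBooleanCumulant φ Bφ) :
    ∀ l : List B, l ≠ [] → (∀ x ∈ l, φ x = 0) → φ (Wof φ l) = Bφ l := by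
  suffices H : ∀ k : ℕ, ∀ l : List B, l.length = k → l ≠ [] →
      (∀ x ∈ l, φ x = 0) → φ (Wof φ l) = Bφ l by
    intro l hne h0
    exact H l.length l rfl hne h0
  intro k
  induction k using Nat.strong_induction_on with
  | _ k IH =>
  intro l hk hne h0
  subst hk
  have e1 : φ l.prod = φ (Wof φ l) + ∑ j ∈ Finset.Ico 1 l.length,
      φ (Wof φ (l.drop j)) * φ ((l.take j).prod) := by
    rw [prod_eq_W φ l hne h0, map_add, map_sum]
    congr 1
    apply Finset.sum_congr rfl
    intro j _
    rw [map_smul, smul_eq_mul]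
  have e2 := momentRec φ hφ Bφ hBφ l hne
  have e3 : ∀ j ∈ Finset.Ico 1 l.length, φ (Wof φ (l.drop j)) = Bφ (l.drop j) := by
    intro j hj
    rw [Finset.mem_Ico] at hj
    have hdl : (l.drop j).length = l.length - j := List.length_drop
    apply IH (l.drop j).length (by omega) (l.drop j) rfl
    · intro h
      rw [← List.length_eq_zero_iff] at h
      omega
    · intro x hx
      exact h0 x (List.mem_of_mem_drop hx)
  rw [Finset.sum_congr rfl (fun j hj => by rw [e3 j hj, mul_comm])] at e1
  rw [e1] at e2
  exact add_right_cancel e2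

-- ### noncrossing partition basics

lemma mem_NCSet {n : ℕ} {P : Finset (Finset (Fin n))} : P ∈ NCSet n ↔ IsNC P := by
  simp [NCSet]

lemma mem_NCnsSet {n : ℕ} {P : Finset (Finset (Fin n))} :
    P ∈ NCnsSet n ↔ IsNC P ∧ ∀ V ∈ P, 2 ≤ V.card := by
  simp [NCnsSet]

lemma full_isNC {n : ℕ} (hn : 1 ≤ n) :
    IsNC ({Finset.univ} : Finset (Finset (Fin n))) := by
  have h0 : (0 : ℕ) < n := hn
  refine ⟨⟨?_, ?_⟩, ?_⟩
  · intro V hV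
    rw [Finset.mem_singleton] at hV
    subst hV
    exact ⟨⟨0, h0⟩, Finset.mem_univ _⟩
  · intro i
    exact ⟨Finset.univ, ⟨Finset.mem_singleton_self _, Finset.mem_univ _⟩,
      fun W hW => Finset.mem_singleton.mp hW.1⟩
  · intro i j k l _ _ _ _ _
    exact ⟨Finset.univ, Finset.mem_singleton_self _, Finset.mem_univ _, Finset.mem_univ _⟩

lemma full_mem_NCSet {n : ℕ} (hn : 1 ≤ n) :
    ({Finset.univ} : Finset (Finset (Fin n))) ∈ NCSet n :=
  mem_NCSet.mpr (full_isNC hn)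

lemma full_mem_NCnsSet {n : ℕ} (hn : 2 ≤ n) :
    ({Finset.univ} : Finset (Finset (Fin n))) ∈ NCnsSet n := by
  rw [mem_NCnsSet]
  refine ⟨full_isNC (by omega), ?_⟩
  intro V hV
  rw [Finset.mem_singleton] at hV
  subst hV
  rw [Finset.card_univ, Fintype.card_fin]
  exact hn

lemma eq_full_of_univ_mem {n : ℕ} {P : Finset (Finset (Fin n))} (hP : IsPartition P)
    (hu : Finset.univ ∈ P) : P = {Finset.univ} := by
  apply Finset.ext
  intro W
  rw [Finset.mem_singleton]
  constructor
  · intro hW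
    obtain ⟨x, hx⟩ := hP.1 W hW
    exact block_eq hP hW hu hx (Finset.mem_univ _)
  · rintro rfl
    exact hu

lemma blocks_card_lt {n : ℕ} {P : Finset (Finset (Fin n))} (hP : IsPartition P)
    (hPne : P ≠ {Finset.univ}) {V : Finset (Fin n)} (hV : V ∈ P) : V.card < n := by
  rcases lt_or_ge V.card n with h | h
  · exact h
  · exfalso
    have : V = Finset.univ := by
      apply Finset.eq_univ_of_card
      have h2 := Finset.card_le_univ V
      rw [Fintype.card_fin] at h2 ⊢
      omega
    subst this
    exact hPne (eq_full_of_univ_mem hP hV)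

lemma NCSet_one : NCSet 1 = {({Finset.univ} : Finset (Finset (Fin 1)))} := by
  apply Finset.ext
  intro P
  rw [Finset.mem_singleton, mem_NCSet]
  constructor
  · intro hP
    obtain ⟨V, ⟨hV, h0V⟩, _⟩ := hP.1.2 0
    have hVu : V = Finset.univ := by
      apply Finset.eq_univ_iff_forall.mpr
      intro x
      have : x = 0 := Subsingleton.elim x 0
      rwa [this]
    exact eq_full_of_univ_mem hP.1 (hVu ▸ hV)
  · rintro rfl
    exact full_isNC le_rfl

lemma NCnsSet_one : NCnsSet 1 = ∅ := by
  apply Finset.eq_empty_of_forall_notMem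
  intro P hP
  rw [mem_NCnsSet] at hP
  obtain ⟨V, ⟨hV, _⟩, _⟩ := hP.1.1.2 0
  have h2 := hP.2 V hV
  have h3 := Finset.card_le_univ V
  rw [Fintype.card_fin] at h3
  omega

lemma NCnsSet_eq_filter {n : ℕ} :
    NCnsSet n = (NCSet n).filter (fun P => ∀ V ∈ P, 2 ≤ V.card) := by
  apply Finset.ext
  intro P
  rw [mem_NCnsSet, Finset.mem_filter, mem_NCSet]

end Aux

set_option maxHeartbeats 1000000 in
theorem statement10 {B : Type*} [Ring B] [Algebra ℂ B]
    (φ : B →ₗ[ℂ] ℂ) (hφ : φ 1 = 1) (t : ℝ) (ht : 0 ≤ t)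
    (Ψt : TensorAlgebra ℂ (LinearMap.ker φ) →ₗ[ℂ] ℂ) (hΨt : IsPsiT φ t Ψt)
    (RΨ : List (TensorAlgebra ℂ (LinearMap.ker φ)) → ℂ) (hRΨ : IsFreeCumulant Ψt RΨ)
    (Bφ : List B → ℂ) (hBφ : IsBooleanCumulant φ Bφ)
    (n : ℕ) (hn : 1 ≤ n) (f : Fin n → LinearMap.ker φ) :
    RΨ (List.ofFn fun i => TensorAlgebra.ι ℂ (f i))
      = (t : ℂ) * Bφ (List.ofFn fun i => (f i : B)) := by
  have hBsingle : ∀ b : B, Bφ [b] = φ b := by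
    intro b
    have h := momentRec φ hφ Bφ hBφ [b] (by simp)
    simp at h
    exact h.symm
  have hkey := key_lemma φ hφ Bφ hBφ
  suffices H : ∀ N : ℕ, 1 ≤ N → ∀ g : Fin N → LinearMap.ker φ,
      RΨ (List.ofFn fun i => TensorAlgebra.ι ℂ (g i))
        = (t : ℂ) * Bφ (List.ofFn fun i => ((g i : B))) by
    exact H n hn f
  intro N
  induction N using Nat.strong_induction_on with
  | _ N IH =>
  intro hN g
  set Fι : Fin N → TensorAlgebra ℂ (LinearMap.ker φ) := fun i => TensorAlgebra.ι ℂ (g i)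
    with hFι
  set gB : Fin N → B := fun i => ((g i : B)) with hgB
  have hker : ∀ i, φ (gB i) = 0 := fun i => (g i).2
  have h1 := hRΨ N hN Fι
  have h2 := hΨt.2 N hN g
  have h12 : (∑ P ∈ NCSet N, ∏ V ∈ P, RΨ (blockList Fι V))
      = ∑ P ∈ NCnsSet N, (t : ℂ) ^ P.card * ∏ V ∈ P, φ (Wblock φ gB V) := h1.symm.trans h2
  -- blocks of non-full partitions are handled by the induction hypothesis
  have hblock : ∀ P : Finset (Finset (Fin N)), IsPartition P → P ≠ {Finset.univ} →
      ∀ V ∈ P, RΨ (blockList Fι V) = (t : ℂ) * Bφ (blockList gB V) := by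
    intro P hP hPne V hV
    have hcard : V.card < N := blocks_card_lt hP hPne hV
    have hpos : 0 < V.card := Finset.card_pos.mpr (hP.1 V hV)
    have hslen : (V.sort (· ≤ ·)).length = V.card := Finset.length_sort _
    rw [blockList_eq_ofFn, blockList_eq_ofFn]
    exact IH (V.sort (· ≤ ·)).length (by omega) (by omega)
      (fun i => g ((V.sort (· ≤ ·)).get i))
  -- the Boolean cumulant of a block list over the kernel is given by W
  have hBW : ∀ V : Finset (Fin N), V.Nonempty →
      Bφ (blockList gB V) = φ (Wblock φ gB V) := by
    intro V hVne
    have hne : blockList gB V ≠ [] := by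
      intro h
      have := congrArg List.length h
      rw [blockList, List.length_map, Finset.length_sort] at this
      simp at this
      exact Finset.nonempty_iff_ne_empty.mp hVne this
    have hmem : ∀ x ∈ blockList gB V, φ x = 0 := by
      intro x hx
      rw [blockList, List.mem_map] at hx
      obtain ⟨i, _, rfl⟩ := hx
      exact hker i
    exact (hkey (blockList gB V) hne hmem).symm
  -- split the free-cumulant sum at the full partition
  have hfull : ({Finset.univ} : Finset (Finset (Fin N))) ∈ NCSet N := full_mem_NCSet hN
  have hsplit1 : ∑ P ∈ NCSet N, ∏ V ∈ P, RΨ (blockList Fι V)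
      = RΨ (List.ofFn Fι)
        + ∑ P ∈ (NCSet N).erase {Finset.univ}, ∏ V ∈ P, RΨ (blockList Fι V) := by
    rw [← Finset.add_sum_erase _ _ hfull, Finset.prod_singleton, blockList_univ]
  -- rewrite the erased sum
  have hS : ∑ P ∈ (NCSet N).erase {Finset.univ}, ∏ V ∈ P, RΨ (blockList Fι V)
      = ∑ P ∈ (NCnsSet N).erase {Finset.univ},
          (t : ℂ) ^ P.card * ∏ V ∈ P, φ (Wblock φ gB V) := by
    have step1 : ∑ P ∈ (NCSet N).erase {Finset.univ}, ∏ V ∈ P, RΨ (blockList Fι V)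
        = ∑ P ∈ (NCSet N).erase {Finset.univ},
            (t : ℂ) ^ P.card * ∏ V ∈ P, Bφ (blockList gB V) := by
      apply Finset.sum_congr rfl
      intro P hP
      rw [Finset.mem_erase, mem_NCSet] at hP
      rw [Finset.prod_congr rfl (hblock P hP.2.1 hP.1),
        Finset.prod_mul_distrib, Finset.prod_const]
    have step2 : ∑ P ∈ (NCSet N).erase {Finset.univ},
            (t : ℂ) ^ P.card * ∏ V ∈ P, Bφ (blockList gB V)
        = ∑ P ∈ ((NCSet N).erase {Finset.univ}).filter (fun P => ∀ V ∈ P, 2 ≤ V.card),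
            (t : ℂ) ^ P.card * ∏ V ∈ P, Bφ (blockList gB V) := by
      symm
      apply Finset.sum_filter_of_ne
      intro P hP hne0
      by_contra hcon
      push_neg at hcon
      obtain ⟨V, hV, hVcard⟩ := hcon
      rw [Finset.mem_erase, mem_NCSet] at hP
      have hpos : 0 < V.card := Finset.card_pos.mpr (hP.2.1.1 V hV)
      have hone : V.card = 1 := by omega
      obtain ⟨x, rfl⟩ := Finset.card_eq_one.mp hone
      apply hne0
      rw [Finset.prod_eq_zero hV (by rw [blockList_singleton, hBsingle, hker]),
        mul_zero]
    have step3 : ((NCSet N).erase {Finset.univ}).filter (fun P => ∀ V ∈ P, 2 ≤ V.card)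
        = (NCnsSet N).erase {Finset.univ} := by
      rw [NCnsSet_eq_filter]
      ext P
      simp only [Finset.mem_filter, Finset.mem_erase]
      tauto
    rw [step1, step2, step3]
    apply Finset.sum_congr rfl
    intro P hP
    rw [Finset.mem_erase, mem_NCnsSet] at hP
    congr 1
    apply Finset.prod_congr rfl
    intro V hV
    have hVne : V.Nonempty := hP.2.1.1.1 V hV
    exact hBW V hVne
  rcases eq_or_lt_of_le hN with h1N | h2N
  · -- N = 1
    subst h1N
    rw [NCSet_one, NCnsSet_one, Finset.sum_singleton, Finset.sum_empty,
      Finset.prod_singleton, blockList_univ] at h12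
    have hofn : List.ofFn gB = [gB 0] := by
      simp [List.ofFn_succ]
    rw [h12, hofn, hBsingle, hker, mul_zero]
  · -- 2 ≤ N
    have h2N' : 2 ≤ N := h2N
    have hfull2 : ({Finset.univ} : Finset (Finset (Fin N))) ∈ NCnsSet N :=
      full_mem_NCnsSet h2N'
    have hsplit2 : ∑ P ∈ NCnsSet N, (t : ℂ) ^ P.card * ∏ V ∈ P, φ (Wblock φ gB V)
        = (t : ℂ) * Bφ (List.ofFn gB)
          + ∑ P ∈ (NCnsSet N).erase {Finset.univ},
              (t : ℂ) ^ P.card * ∏ V ∈ P, φ (Wblock φ gB V) := by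
      rw [← Finset.add_sum_erase _ _ hfull2]
      congr 1
      rw [Finset.card_singleton, pow_one, Finset.prod_singleton]
      congr 1
      have hne : List.ofFn gB ≠ [] := by
        intro h
        have := congrArg List.length h
        rw [List.length_ofFn] at this
        simp at this
        omega
      have hmem : ∀ x ∈ List.ofFn gB, φ x = 0 := by
        intro x hx
        rw [List.mem_ofFn] at hx
        obtain ⟨i, rfl⟩ := hx
        exact hker i
      have := hkey (List.ofFn gB) hne hmem
      rw [Wblock, blockList_univ]
      exact this
    rw [hsplit1, hS, hsplit2] at h12
    exact add_right_cancel h12
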